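/- arXiv:2503.18563 — 14 statements merged into one kernel-verified Lean document; each statement's English description precedes it below -/
import Mathlib

section
/- Fix θ ∈ (0,1] and a, b > 0 with a + b ≥ 1, and define f : [0,1) → ℝ by f(s) = 1 − (a·(1−s)^{−θ} + b)^{−1/θ}. Then for every n ≥ 1 and every s ∈ [0,1), the n-fold iterate of f satisfies f^{∘n}(s) = 1 − (a^n·(1−s)^{−θ} + b_n)^{−1/θ}, where b_n = b·∑_{k=0}^{n−1} a^k. Equivalently, (1 − f^{∘n}(s))^{−θ} = a^n·(1−s)^{−θ} + b_n. -/
/-- For the pgf `f` of the power-fractional law `PF(θ,a,b)`, the `n`-fold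
iterate satisfies `f^[n] s = 1 - (a^n (1-s)^(-θ) + b_n)^(-1/θ)` with
`b_n = b ∑_{k<n} a^k`, equivalently `(1 - f^[n] s)^(-θ) = a^n (1-s)^(-θ) + b_n`. -/
theorem pf_iterate (θ a b : ℝ) (hθ : θ ∈ Set.Ioc (0:ℝ) 1) (ha : 0 < a) (hb : 0 < b)
    (hab : 1 ≤ a + b) (f : ℝ → ℝ)
    (hf : ∀ s ∈ Set.Ico (0:ℝ) 1, f s = 1 - (a * (1 - s) ^ (-θ) + b) ^ (-1/θ)) :
    ∀ n : ℕ, 1 ≤ n → ∀ s ∈ Set.Ico (0:ℝ) 1,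
      f^[n] s = 1 - (a ^ n * (1 - s) ^ (-θ) + b * ∑ k ∈ Finset.range n, a ^ k) ^ (-1/θ) ∧
      (1 - f^[n] s) ^ (-θ) = a ^ n * (1 - s) ^ (-θ) + b * ∑ k ∈ Finset.range n, a ^ k := by
  obtain ⟨hθ0, hθ1⟩ := hθ
  have hθne : θ ≠ 0 := ne_of_gt hθ0
  have hexp : (-1/θ) * (-θ) = 1 := by field_simp
  have key : ∀ s ∈ Set.Ico (0:ℝ) 1,
      f s ∈ Set.Ico (0:ℝ) 1 ∧ (1 - f s) ^ (-θ) = a * (1 - s) ^ (-θ) + b := by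
    intro s hs
    obtain ⟨hs0, hs1⟩ := hs
    have h1s : 0 < 1 - s := by linarith
    have ht1 : 1 ≤ (1 - s) ^ (-θ) :=
      Real.one_le_rpow_of_pos_of_le_one_of_nonpos h1s (by linarith) (by linarith)
    have hA1 : 1 ≤ a * (1 - s) ^ (-θ) + b := by nlinarith
    have hA0 : 0 < a * (1 - s) ^ (-θ) + b := by linarith
    have hfs := hf s ⟨hs0, hs1⟩
    have hle : (a * (1 - s) ^ (-θ) + b) ^ (-1/θ) ≤ 1 :=
      Real.rpow_le_one_of_one_le_of_nonpos hA1 (by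
        rw [neg_div]; exact neg_nonpos.mpr (by positivity))
    have hpos : 0 < (a * (1 - s) ^ (-θ) + b) ^ (-1/θ) := Real.rpow_pos_of_pos hA0 _
    refine ⟨⟨by rw [hfs]; linarith, by rw [hfs]; linarith⟩, ?_⟩
    rw [hfs, show 1 - (1 - (a * (1 - s) ^ (-θ) + b) ^ (-1/θ))
        = (a * (1 - s) ^ (-θ) + b) ^ (-1/θ) by ring,
      ← Real.rpow_mul hA0.le, hexp, Real.rpow_one]
  intro n hn
  induction n, hn using Nat.le_induction with
  | base =>
    intro s hs
    have hk := key s hs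
    simp only [Function.iterate_one, pow_one, Finset.range_one, Finset.sum_singleton,
      pow_zero, mul_one]
    exact ⟨hf s hs, hk.2⟩
  | succ n hn ih =>
    intro s hs
    have hk := key s hs
    obtain ⟨ih1, ih2⟩ := ih (f s) hk.1
    rw [Function.iterate_succ_apply]
    constructor
    · rw [ih1, hk.2, Finset.sum_range_succ]
      congr 2
      ring
    · rw [ih2, hk.2, Finset.sum_range_succ]
      ring
end

section
/- Fix θ ∈ (0,1] and, for k = 1,…,n, pairs a_k, b_k > 0 with a_k + b_k ≥ 1. Let f_k(s) = 1 − (a_k·(1−s)^{−θ} + b_k)^{−1/θ} for s ∈ [0,1). Then the composition f_1 ∘ f_2 ∘ … ∘ f_n satisfies, for all s ∈ [0,1), (1 − f_1∘…∘f_n(s))^{−θ} = A·(1−s)^{−θ} + B, where A = ∏_{k=1}^n a_k and B = ∑_{k=1}^n b_k·∏_{i=1}^{k−1} a_i; that is, f_1∘…∘f_n is the probability generating function of PF(θ, A, B). -/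
/-- The composition `f 1 ∘ f 2 ∘ … ∘ f n` of a sequence of functions (indexed from 1). -/
noncomputable def compSeq (f : ℕ → ℝ → ℝ) : ℕ → ℝ → ℝ
  | 0 => id
  | n + 1 => compSeq f n ∘ f (n + 1)

lemma pf_step (θ a b : ℝ) (hθ : 0 < θ) (ha : 0 < a) (hb : 0 < b) (hab : 1 ≤ a + b)
    (s : ℝ) (hs : s ∈ Set.Ico (0:ℝ) 1) :
    (1 - (a * (1 - s) ^ (-θ) + b) ^ (-1/θ)) ∈ Set.Ico (0:ℝ) 1 ∧
    (1 - (1 - (a * (1 - s) ^ (-θ) + b) ^ (-1/θ))) ^ (-θ) = a * (1 - s) ^ (-θ) + b := by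
  obtain ⟨hs0, hs1⟩ := hs
  have hu : (1:ℝ) ≤ (1 - s) ^ (-θ) :=
    Real.one_le_rpow_of_pos_of_le_one_of_nonpos (by linarith) (by linarith) (by linarith)
  have hX1 : (1:ℝ) ≤ a * (1 - s) ^ (-θ) + b := by nlinarith
  have hX0 : (0:ℝ) < a * (1 - s) ^ (-θ) + b := by linarith
  have hpos : 0 < (a * (1 - s) ^ (-θ) + b) ^ (-1/θ) := Real.rpow_pos_of_pos hX0 _
  have hle1 : (a * (1 - s) ^ (-θ) + b) ^ (-1/θ) ≤ 1 :=
    Real.rpow_le_one_of_one_le_of_nonpos hX1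
      (by rw [neg_div]; exact neg_nonpos.mpr (by positivity))
  refine ⟨⟨by linarith, by linarith⟩, ?_⟩
  have : 1 - (1 - (a * (1 - s) ^ (-θ) + b) ^ (-1/θ))
      = (a * (1 - s) ^ (-θ) + b) ^ (-1/θ) := by ring
  rw [this, ← Real.rpow_mul hX0.le, show (-1/θ) * (-θ) = 1 by field_simp, Real.rpow_one]

/-- For pgfs `f k` of power-fractional laws `PF(θ, a k, b k)` with fixed `θ`,
the composition `f 1 ∘ … ∘ f n` satisfies
`(1 - f 1 ∘ … ∘ f n(s))^(-θ) = A (1-s)^(-θ) + B` with `A = ∏ a_k`,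
`B = ∑_k b_k ∏_{i<k} a_i`, i.e. it is the pgf of `PF(θ, A, B)`. -/
theorem pf_composition (θ : ℝ) (hθ : θ ∈ Set.Ioc (0:ℝ) 1) (a b : ℕ → ℝ)
    (ha : ∀ k, 1 ≤ k → 0 < a k) (hb : ∀ k, 1 ≤ k → 0 < b k)
    (hab : ∀ k, 1 ≤ k → 1 ≤ a k + b k) (f : ℕ → ℝ → ℝ)
    (hf : ∀ k, 1 ≤ k → ∀ s ∈ Set.Ico (0:ℝ) 1,
      f k s = 1 - (a k * (1 - s) ^ (-θ) + b k) ^ (-1/θ)) :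
    ∀ n : ℕ, 1 ≤ n → ∀ s ∈ Set.Ico (0:ℝ) 1,
      (1 - compSeq f n s) ^ (-θ)
        = (∏ k ∈ Finset.range n, a (k + 1)) * (1 - s) ^ (-θ)
          + ∑ k ∈ Finset.range n, b (k + 1) * ∏ i ∈ Finset.range k, a (i + 1) ∧
      compSeq f n s
        = 1 - ((∏ k ∈ Finset.range n, a (k + 1)) * (1 - s) ^ (-θ)
          + ∑ k ∈ Finset.range n, b (k + 1) * ∏ i ∈ Finset.range k, a (i + 1)) ^ (-1/θ) := by
  obtain ⟨hθ0, hθ1⟩ := hθ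
  intro n hn
  induction n, hn using Nat.le_induction with
  | base =>
    intro s hs
    have h1 := hf 1 le_rfl s hs
    have hstep := pf_step θ (a 1) (b 1) hθ0 (ha 1 le_rfl) (hb 1 le_rfl) (hab 1 le_rfl) s hs
    simp only [compSeq, Function.comp_apply, id_eq, Finset.prod_range_one,
      Finset.sum_range_one, Finset.range_zero, Finset.prod_empty, mul_one]
    rw [h1]
    exact ⟨hstep.2, rfl⟩
  | succ n hn ih =>
    intro s hs
    have h1 := hf (n+1) (by omega) s hs
    have hstep := pf_step θ (a (n+1)) (b (n+1)) hθ0 (ha _ (by omega)) (hb _ (by omega))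
      (hab _ (by omega)) s hs
    rw [← h1] at hstep
    obtain ⟨htIco, htval⟩ := hstep
    obtain ⟨ih1, ih2⟩ := ih (f (n+1) s) htIco
    have hc : compSeq f (n+1) s = compSeq f n (f (n+1) s) := rfl
    have key : (∏ k ∈ Finset.range n, a (k + 1)) * (1 - f (n+1) s) ^ (-θ)
          + ∑ k ∈ Finset.range n, b (k + 1) * ∏ i ∈ Finset.range k, a (i + 1)
        = (∏ k ∈ Finset.range (n+1), a (k + 1)) * (1 - s) ^ (-θ)
          + ∑ k ∈ Finset.range (n+1), b (k + 1) * ∏ i ∈ Finset.range k, a (i + 1) := by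
      rw [htval, Finset.prod_range_succ, Finset.sum_range_succ]
      ring
    refine ⟨?_, ?_⟩
    · rw [hc, ih1, key]
    · rw [hc, ih2, key]
end

section
/- Fix θ ∈ (0,1] and a, b > 0 with a + b ≥ 1, and let f(s) = 1 − ρ(s)(1−s) where ρ(s) = (a + b(1−s)^θ)^{−1/θ} for s ∈ [0,1). Define coefficients c_{n,i} for n ≥ 2, 0 ≤ i ≤ n by c_{2,1} = 1+θ, c_{n,0} = c_{n,n} = 0 for all n ≥ 2, and c_{n,i} = (n−2−iθ)·c_{n−1,i} + (1+iθ)·c_{n−1,i−1} for n ≥ 3 and 1 ≤ i ≤ n−1. Then for every n ≥ 2 and s ∈ [0,1), the n-th derivative of f satisfies f^{(n)}(s) = ∑_{i=1}^{n−1} a·b^i·c_{n,i}·ρ(s)^{(i+1)θ+1}·(1−s)^{iθ−n+1}. -/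
/-!
Write `ρ = (a + b(1-s)^θ)^(-1/θ)`. Since `ρ^(-θ) = a + b(1-s)^θ`, one gets
`ρ' = b ρ^(θ+1) (1-s)^(θ-1)` and `f' = a ρ^(θ+1)`, and every monomial `ρ^p (1-s)^q`
differentiates into two monomials of the same shape. For
`T_{n,i} = ρ^((i+1)θ+1) (1-s)^(iθ-n+1)` this reads
`T_{n,i}' = ((i+1)θ+1) b T_{n+1,i+1} + (n-1-iθ) T_{n+1,i}`, so differentiating
`∑ a b^i c_{n,i} T_{n,i}` and collecting the coefficient of `T_{n+1,i}` reproduces the recursion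
for `c_{n+1,i}`; the boundary values `c_{n,0} = c_{n,n} = 0` absorb the index shift.
-/

open Real Set Finset

theorem sum_Ico_add_pred {M : Type*} [AddCommMonoid M] (u v : ℕ → M) {n : ℕ}
    (hu : u n = 0) (hv : v 0 = 0) :
    ∑ i ∈ Ico 1 (n + 1), (u i + v (i - 1)) = ∑ i ∈ Ico 1 n, (u i + v i) := by
  rcases n with _ | n
  · simp
  have hshift : ∑ i ∈ Ico 1 (n + 2), v (i - 1) = ∑ i ∈ Ico 0 (n + 1), v i := by
    simpa using (sum_Ico_add' (fun i => v (i - 1)) 0 (n + 1) 1).symm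
  rw [sum_add_distrib, sum_add_distrib, sum_Ico_succ_top (Nat.le_add_left 1 n) u, hu, add_zero,
    hshift, sum_eq_sum_Ico_succ_bot (Nat.succ_pos n) v, hv, zero_add]

theorem iteratedDeriv_succ_eqOn {𝕜 F : Type*} [NontriviallyNormedField 𝕜] [NormedAddCommGroup F]
    [NormedSpace 𝕜 F] {n : ℕ} {f g g' : 𝕜 → F} {U : Set 𝕜} (hU : IsOpen U)
    (hf : EqOn (iteratedDeriv n f) g U) (hg : ∀ x ∈ U, HasDerivAt g (g' x) x) :
    EqOn (iteratedDeriv (n + 1) f) g' U := fun x hx => by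
  rw [iteratedDeriv_succ, (hf.eventuallyEq_of_mem (hU.mem_nhds hx)).deriv_eq]
  exact (hg x hx).deriv

noncomputable def pfRho (θ a b x : ℝ) : ℝ := (a + b * (1 - x) ^ θ) ^ (-1/θ)

/-- The monomial `T_{n,i}`. -/
noncomputable def pfTerm (θ a b : ℝ) (n i : ℕ) (x : ℝ) : ℝ :=
  pfRho θ a b x ^ (((i : ℝ) + 1) * θ + 1) * (1 - x) ^ ((i : ℝ) * θ - n + 1)

section
variable {θ a b x : ℝ}

theorem pfBase_pos (ha : 0 < a) (hb : 0 ≤ b) (hx : x < 1) : 0 < a + b * (1 - x) ^ θ := by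
  have : 0 ≤ (1 - x) ^ θ := rpow_nonneg (by linarith) θ
  positivity

theorem pfRho_pos (ha : 0 < a) (hb : 0 ≤ b) (hx : x < 1) : 0 < pfRho θ a b x :=
  rpow_pos_of_pos (pfBase_pos ha hb hx) _

theorem pfRho_rpow_add_one (hθ : θ ≠ 0) (ha : 0 < a) (hb : 0 ≤ b) (hx : x < 1) :
    pfRho θ a b x ^ (θ + 1) = (a + b * (1 - x) ^ θ) ^ (-1/θ - 1) := by
  rw [pfRho, ← rpow_mul (pfBase_pos ha hb hx).le]
  congr 1
  field_simp
  ring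

theorem hasDerivAt_pfRho (hθ : θ ≠ 0) (ha : 0 < a) (hb : 0 ≤ b) (hx : x < 1) :
    HasDerivAt (pfRho θ a b) (b * pfRho θ a b x ^ (θ + 1) * (1 - x) ^ (θ - 1)) x := by
  have hbase : HasDerivAt (fun y => a + b * (1 - y) ^ θ) (b * (-1 * θ * (1 - x) ^ (θ - 1))) x :=
    ((((hasDerivAt_id x).const_sub 1).rpow_const (Or.inl (sub_ne_zero.2 hx.ne'))).const_mul
      b).const_add a
  refine (hbase.rpow_const (p := -1/θ) (Or.inl (pfBase_pos ha hb hx).ne')).congr_deriv ?_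
  rw [pfRho_rpow_add_one hθ ha hb hx]
  field_simp

theorem hasDerivAt_pfRho_rpow_mul_rpow (hθ : θ ≠ 0) (ha : 0 < a) (hb : 0 ≤ b) (hx : x < 1)
    (p q : ℝ) :
    HasDerivAt (fun y => pfRho θ a b y ^ p * (1 - y) ^ q)
      (p * b * pfRho θ a b x ^ (p + θ) * (1 - x) ^ (q + θ - 1)
        - q * pfRho θ a b x ^ p * (1 - x) ^ (q - 1)) x := by
  have h1x : 0 < 1 - x := by linarith
  have hρ := pfRho_pos (θ := θ) ha hb hx
  have h := ((hasDerivAt_pfRho hθ ha hb hx).rpow_const (p := p) (Or.inl hρ.ne')).mul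
    (((hasDerivAt_id x).const_sub 1).rpow_const (p := q) (Or.inl h1x.ne'))
  refine h.congr_deriv ?_
  rw [show p + θ = (p - 1) + (θ + 1) by ring, rpow_add hρ (p - 1) (θ + 1),
    show q + θ - 1 = (θ - 1) + q by ring, rpow_add h1x (θ - 1) q]
  simp only [id]
  ring

theorem hasDerivAt_pfTerm (hθ : θ ≠ 0) (ha : 0 < a) (hb : 0 ≤ b) (hx : x < 1) (n i : ℕ) :
    HasDerivAt (pfTerm θ a b n i)
      (((i + 1) * θ + 1) * b * pfTerm θ a b (n + 1) (i + 1) x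
        + (n - 1 - i * θ) * pfTerm θ a b (n + 1) i x) x := by
  refine (hasDerivAt_pfRho_rpow_mul_rpow hθ ha hb hx _ _).congr_deriv ?_
  simp only [pfTerm]
  push_cast
  ring_nf

theorem hasDerivAt_pfPgf (hθ : θ ≠ 0) (ha : 0 < a) (hb : 0 ≤ b) (hx : x < 1) :
    HasDerivAt (fun y => 1 - pfRho θ a b y * (1 - y)) (a * pfTerm θ a b 1 0 x) x := by
  have h1x : 0 < 1 - x := by linarith
  have hρ : pfRho θ a b x = pfRho θ a b x ^ (θ + 1) * (a + b * (1 - x) ^ θ) := by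
    rw [pfRho_rpow_add_one hθ ha hb hx, ← rpow_add_one (pfBase_pos ha hb hx).ne', sub_add_cancel,
      pfRho]
  refine (((hasDerivAt_pfRho hθ ha hb hx).mul ((hasDerivAt_id x).const_sub 1)).const_sub
    1).congr_deriv ?_
  simp only [pfTerm, id, Nat.cast_zero, Nat.cast_one, zero_add, one_mul, zero_mul, zero_sub,
    neg_add_cancel, rpow_zero, mul_one]
  rw [rpow_sub_one h1x.ne']
  field_simp
  linear_combination hρ

theorem hasDerivAt_sum_pfTerm (hθ : θ ≠ 0) (ha : 0 < a) (hb : 0 ≤ b) (hx : x < 1)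
    {c : ℕ → ℕ → ℝ} {n : ℕ} (hc0 : c n 0 = 0) (hcn : c n n = 0)
    (hrec : ∀ i, 1 ≤ i → i ≤ n →
      c (n + 1) i = ((n : ℝ) - 1 - i * θ) * c n i + (1 + i * θ) * c n (i - 1)) :
    HasDerivAt (fun y => ∑ i ∈ Ico 1 n, a * b ^ i * c n i * pfTerm θ a b n i y)
      (∑ i ∈ Ico 1 (n + 1), a * b ^ i * c (n + 1) i * pfTerm θ a b (n + 1) i x) x := by
  refine (HasDerivAt.fun_sum fun i _ =>
    (hasDerivAt_pfTerm hθ ha hb hx n i).const_mul (a * b ^ i * c n i)).congr_deriv ?_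
  set u := fun i : ℕ => a * b ^ i * c n i * (n - 1 - i * θ) * pfTerm θ a b (n + 1) i x
  set v := fun i : ℕ =>
    a * b ^ (i + 1) * c n i * ((i + 1) * θ + 1) * pfTerm θ a b (n + 1) (i + 1) x
  calc _ = ∑ i ∈ Ico 1 n, (u i + v i) := sum_congr rfl fun i _ => by ring
    _ = ∑ i ∈ Ico 1 (n + 1), (u i + v (i - 1)) :=
      (sum_Ico_add_pred u v (by simp [u, hcn]) (by simp [v, hc0])).symm
    _ = _ := sum_congr rfl fun i hi => by
      obtain ⟨j, rfl⟩ : ∃ j, i = j + 1 := Nat.exists_eq_add_of_le' (mem_Ico.1 hi).1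
      rw [hrec (j + 1) (Nat.le_add_left 1 j) (Nat.lt_succ_iff.1 (mem_Ico.1 hi).2)]
      simp only [u, v, Nat.add_sub_cancel]
      push_cast
      ring
end

theorem pf_iterated_deriv_general (θ a b : ℝ) (hθ : θ ∈ Set.Ioc (0:ℝ) 1) (ha : 0 < a) (hb : 0 < b)
    (c : ℕ → ℕ → ℝ)
    (hc21 : c 2 1 = 1 + θ)
    (hc0 : ∀ n, 2 ≤ n → c n 0 = 0) (hcn : ∀ n, 2 ≤ n → c n n = 0)
    (hcrec : ∀ n i, 3 ≤ n → 1 ≤ i → i ≤ n - 1 →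
      c n i = ((n : ℝ) - 2 - i * θ) * c (n - 1) i + (1 + i * θ) * c (n - 1) (i - 1)) :
    ∀ n : ℕ, 2 ≤ n → ∀ s ∈ Set.Ico (0:ℝ) 1,
      iteratedDeriv n (fun x : ℝ => 1 - (a + b * (1 - x) ^ θ) ^ (-1/θ) * (1 - x)) s
        = ∑ i ∈ Finset.Icc 1 (n - 1),
            a * b ^ i * c n i * ((a + b * (1 - s) ^ θ) ^ (-1/θ)) ^ (((i : ℝ) + 1) * θ + 1)
              * (1 - s) ^ ((i : ℝ) * θ - n + 1) := by
  have hθ0 : θ ≠ 0 := hθ.1.ne'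
  set f := fun x : ℝ => 1 - pfRho θ a b x * (1 - x)
  have h1 : EqOn (iteratedDeriv 1 f) (fun x => a * pfTerm θ a b 1 0 x) (Iio 1) := fun x hx => by
    rw [iteratedDeriv_one]
    exact (hasDerivAt_pfPgf hθ0 ha hb.le hx).deriv
  have h2 : EqOn (iteratedDeriv 2 f)
      (fun x => ∑ i ∈ Ico 1 2, a * b ^ i * c 2 i * pfTerm θ a b 2 i x) (Iio 1) :=
    iteratedDeriv_succ_eqOn isOpen_Iio h1 fun x hx =>
      ((hasDerivAt_pfTerm hθ0 ha hb.le hx 1 0).const_mul a).congr_deriv <| by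
        rw [Nat.Ico_succ_singleton, sum_singleton, hc21]
        push_cast
        ring
  have hn : ∀ n, 2 ≤ n → EqOn (iteratedDeriv n f)
      (fun x => ∑ i ∈ Ico 1 n, a * b ^ i * c n i * pfTerm θ a b n i x) (Iio 1) := by
    refine Nat.le_induction h2 fun n hn ih => iteratedDeriv_succ_eqOn isOpen_Iio ih fun x hx =>
      hasDerivAt_sum_pfTerm hθ0 ha hb.le hx (hc0 n hn) (hcn n hn) fun i hi1 hin => ?_
    rw [hcrec (n + 1) i (by omega) hi1 (by omega), Nat.add_sub_cancel]
    push_cast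
    ring
  intro n hn2 s hs
  refine (hn n hn2 hs.2).trans ?_
  rw [← Finset.Ico_add_one_right_eq_Icc, Nat.sub_add_cancel (by omega : 1 ≤ n)]
  simp only [pfTerm, pfRho, mul_assoc]

/-- with `ρ(s) = (a + b(1-s)^θ)^(-1/θ)` and `f(s) = 1 - ρ(s)(1-s)` (the pgf of
`PF(θ,a,b)`), and coefficients `c n i` defined by `c 2 1 = 1+θ`, `c n 0 = c n n = 0` and the
recursion `c n i = (n-2-iθ) c (n-1) i + (1+iθ) c (n-1) (i-1)`, the `n`-th derivative of `f`
satisfies `f^{(n)}(s) = ∑_{i=1}^{n-1} a b^i c_{n,i} ρ(s)^{(i+1)θ+1} (1-s)^{iθ-n+1}`. -/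
theorem pf_iterated_deriv (θ a b : ℝ) (hθ : θ ∈ Set.Ioc (0:ℝ) 1) (ha : 0 < a) (hb : 0 < b)
    (hab : 1 ≤ a + b) (c : ℕ → ℕ → ℝ)
    (hc21 : c 2 1 = 1 + θ)
    (hc0 : ∀ n, 2 ≤ n → c n 0 = 0) (hcn : ∀ n, 2 ≤ n → c n n = 0)
    (hcrec : ∀ n i, 3 ≤ n → 1 ≤ i → i ≤ n - 1 →
      c n i = ((n : ℝ) - 2 - i * θ) * c (n - 1) i + (1 + i * θ) * c (n - 1) (i - 1)) :
    ∀ n : ℕ, 2 ≤ n → ∀ s ∈ Set.Ico (0:ℝ) 1,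
      iteratedDeriv n (fun x : ℝ => 1 - (a + b * (1 - x) ^ θ) ^ (-1/θ) * (1 - x)) s
        = ∑ i ∈ Finset.Icc 1 (n - 1),
            a * b ^ i * c n i * ((a + b * (1 - s) ^ θ) ^ (-1/θ)) ^ (((i : ℝ) + 1) * θ + 1)
              * (1 - s) ^ ((i : ℝ) * θ - n + 1) :=
  pf_iterated_deriv_general θ a b hθ ha hb c hc21 hc0 hcn hcrec
end

section
/- Let θ ∈ (0,1], a ∈ (0,1) and b > 0 with a + b ≥ 1, and let f(s) = 1 − (a·(1−s)^{−θ} + b)^{−1/θ} for s ∈ [0,1). Then the iterates at 0 converge: lim_{n→∞} f^{∘n}(0) = 1 − ((1−a)/b)^{1/θ}. In particular, the extinction probability of a Galton–Watson process with one ancestor and offspring law PF(θ,a,b) equals q = 1 − ((1−a)/b)^{1/θ}. -/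
/-- in the supercritical case `a ∈ (0,1)`, the iterates of the pgf of
`PF(θ,a,b)` at `0` converge to the extinction probability `q = 1 - ((1-a)/b)^(1/θ)`. -/
theorem pf_extinction_probability (θ a b : ℝ) (hθ : θ ∈ Set.Ioc (0:ℝ) 1)
    (ha : a ∈ Set.Ioo (0:ℝ) 1) (hb : 0 < b) (hab : 1 ≤ a + b) (f : ℝ → ℝ)
    (hf : ∀ s, f s = 1 - (a * (1 - s) ^ (-θ) + b) ^ (-1/θ)) :
    Filter.Tendsto (fun n : ℕ => f^[n] 0) Filter.atTop
      (nhds (1 - ((1 - a) / b) ^ (1/θ))) := by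
  obtain ⟨hθ0, hθ1⟩ := hθ
  obtain ⟨ha0, ha1⟩ := ha
  have h1a : (0:ℝ) < 1 - a := by linarith
  set c : ℕ → ℝ := fun n => a ^ n + b * (1 - a ^ n) / (1 - a) with hc
  have hcpos : ∀ n, 0 < c n := by
    intro n
    have h1 : 0 < a ^ n := pow_pos ha0 n
    have h2 : a ^ n ≤ 1 := pow_le_one₀ ha0.le ha1.le
    have : 0 ≤ b * (1 - a ^ n) / (1 - a) :=
      div_nonneg (mul_nonneg hb.le (by linarith)) h1a.le
    simp only [hc]; linarith
  have hiter : ∀ n, f^[n] 0 = 1 - (c n) ^ (-1/θ) := by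
    intro n
    induction n with
    | zero =>
      simp [hc, Real.one_rpow]
    | succ n ih =>
      rw [Function.iterate_succ_apply', ih, hf]
      have h1 : (1:ℝ) - (1 - (c n) ^ (-1/θ)) = (c n) ^ (-1/θ) := by ring
      rw [h1]
      have h2 : ((c n) ^ (-1/θ)) ^ (-θ) = c n := by
        rw [← Real.rpow_mul (hcpos n).le, show (-1/θ)*(-θ) = 1 by field_simp,
          Real.rpow_one]
      rw [h2]
      have h3 : a * c n + b = c (n + 1) := by
        simp only [hc]
        field_simp
        ring
      rw [h3]
  have hctend : Filter.Tendsto c Filter.atTop (nhds (b / (1 - a))) := by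
    have hp : Filter.Tendsto (fun n : ℕ => a ^ n) Filter.atTop (nhds 0) :=
      tendsto_pow_atTop_nhds_zero_of_lt_one ha0.le ha1
    have : Filter.Tendsto (fun n : ℕ => a ^ n + b * (1 - a ^ n) / (1 - a))
        Filter.atTop (nhds (0 + b * (1 - 0) / (1 - a))) := by
      exact (hp.add (((tendsto_const_nhds.sub hp).const_mul b).div_const _))
    simpa using this
  have hbpos : 0 < b / (1 - a) := div_pos hb h1a
  have hcont : Filter.Tendsto (fun n : ℕ => 1 - (c n) ^ (-1/θ)) Filter.atTop
      (nhds (1 - (b / (1 - a)) ^ (-1/θ))) := by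
    exact tendsto_const_nhds.sub
      ((Real.continuousAt_rpow_const _ _ (Or.inl hbpos.ne')).tendsto.comp hctend)
  have hkey : (b / (1 - a)) ^ (-1/θ) = ((1 - a) / b) ^ (1/θ) := by
    rw [neg_div, Real.rpow_neg hbpos.le, ← Real.inv_rpow hbpos.le, inv_div]
  rw [← hkey]
  simpa only [hiter] using hcont
end

section
/- Let θ ∈ (0,1], a ∈ (0,1) and b > 0 with a + b ≥ 1, and let f(s) = 1 − (a·(1−s)^{−θ} + b)^{−1/θ}. Then for every u > 0, lim_{n→∞} f^{∘n}(exp(−u·a^{n/θ})) = 1 − (u^{−θ} + b/(1−a))^{−1/θ}. In other words, the normalized population W_n = m^{−n} Z_n of a supercritical Galton–Watson process with offspring law PF(θ,a,b) and mean m = a^{−1/θ} has limiting Laplace transform φ(u) = 1 − (u^{−θ} + b/(1−a))^{−1/θ}. -/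
open Real Filter

lemma pf_iter_formula (θ a b : ℝ) (hθ0 : 0 < θ) (ha0 : 0 < a) (ha1 : a < 1) (hb : 0 < b)
    (f : ℝ → ℝ) (hf : ∀ s, f s = 1 - (a * (1 - s) ^ (-θ) + b) ^ (-1/θ)) :
    ∀ n : ℕ, ∀ s : ℝ, s < 1 →
      f^[n] s = 1 - (a ^ n * (1 - s) ^ (-θ) + b * (1 - a ^ n) / (1 - a)) ^ (-1/θ) := by
  have hθ : θ ≠ 0 := ne_of_gt hθ0
  have h1a : (0:ℝ) < 1 - a := by linarith
  intro n
  induction n with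
  | zero =>
      intro s hs
      have h1s : (0:ℝ) < 1 - s := by linarith
      have key : ((1 - s) ^ (-θ)) ^ (-1/θ) = 1 - s := by
        rw [← Real.rpow_mul h1s.le, show (-θ) * (-1/θ) = 1 by field_simp, Real.rpow_one]
      simp only [Function.iterate_zero_apply, pow_zero]
      rw [show b * (1 - 1) / (1 - a) = 0 by ring, add_zero, one_mul, key]
      ring
  | succ n ih =>
      intro s hs
      have h1s : (0:ℝ) < 1 - s := by linarith
      have hApos : 0 < a ^ n * (1 - s) ^ (-θ) + b * (1 - a ^ n) / (1 - a) := by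
        have h1 : 0 < a ^ n * (1 - s) ^ (-θ) := by positivity
        have han : a ^ n ≤ 1 := pow_le_one₀ ha0.le ha1.le
        have h2 : 0 ≤ b * (1 - a ^ n) / (1 - a) := by
          have : (0:ℝ) ≤ 1 - a ^ n := by linarith
          positivity
        linarith
      rw [Function.iterate_succ_apply', ih s hs, hf]
      rw [show 1 - (1 - (a ^ n * (1 - s) ^ (-θ) + b * (1 - a ^ n) / (1 - a)) ^ (-1/θ))
            = (a ^ n * (1 - s) ^ (-θ) + b * (1 - a ^ n) / (1 - a)) ^ (-1/θ) by ring]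
      rw [← Real.rpow_mul hApos.le, show (-1/θ) * (-θ) = 1 by field_simp, Real.rpow_one]
      congr 2
      field_simp
      ring

lemma pf_aux_key (θ a u : ℝ) (hθ0 : 0 < θ) (ha0 : 0 < a) (hu : 0 < u) (n : ℕ) :
    a ^ n * (1 - Real.exp (-(u * a ^ ((n:ℝ)/θ)))) ^ (-θ)
      = (u * ((1 - Real.exp (-(u * a ^ ((n:ℝ)/θ)))) / (u * a ^ ((n:ℝ)/θ)))) ^ (-θ) := by
  have hθ : θ ≠ 0 := ne_of_gt hθ0
  have he : 0 < u * a ^ ((n:ℝ)/θ) := by positivity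
  have hXp : 0 < 1 - Real.exp (-(u * a ^ ((n:ℝ)/θ))) := by
    have : Real.exp (-(u * a ^ ((n:ℝ)/θ))) < 1 := by
      rw [Real.exp_lt_one_iff]; linarith
    linarith
  set e := u * a ^ ((n:ℝ)/θ) with hedef
  set X := 1 - Real.exp (-e) with hXdef
  have hrpow_neg : ∀ x : ℝ, 0 ≤ x → x ^ (-θ) = (x⁻¹) ^ θ := fun x hx => by
    rw [Real.rpow_neg hx, Real.inv_rpow hx]
  have h1 : ((a:ℝ) ^ ((n:ℝ)/θ)) ^ θ = a ^ n := by
    rw [← Real.rpow_natCast a n, ← Real.rpow_mul ha0.le]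
    congr 1
    field_simp
  have h2 : e / u = a ^ ((n:ℝ)/θ) := by
    rw [hedef]; field_simp
  calc a ^ n * X ^ (-θ) = (e/u) ^ θ * (X⁻¹) ^ θ := by
        rw [← h1, h2, hrpow_neg X hXp.le]
     _ = ((e/u) * X⁻¹) ^ θ := by
        rw [← Real.mul_rpow (by positivity) (by positivity)]
     _ = ((u * (X / e))⁻¹) ^ θ := by
        congr 1
        field_simp
     _ = (u * (X / e)) ^ (-θ) := by
        rw [hrpow_neg _ (by positivity)]

lemma pf_aux_eps (θ a u : ℝ) (hθ0 : 0 < θ) (ha0 : 0 < a) (ha1 : a < 1) :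
    Tendsto (fun n : ℕ => u * a ^ ((n:ℝ)/θ)) atTop (nhds 0) := by
  have hc1 : a ^ ((1:ℝ)/θ) < 1 := Real.rpow_lt_one ha0.le ha1 (by positivity)
  have hc0 : (0:ℝ) ≤ a ^ ((1:ℝ)/θ) := (Real.rpow_pos_of_pos ha0 _).le
  have h := (tendsto_pow_atTop_nhds_zero_of_lt_one hc0 hc1).const_mul u
  rw [mul_zero] at h
  refine h.congr fun n => ?_
  congr 1
  rw [← Real.rpow_natCast (a ^ ((1:ℝ)/θ)) n, ← Real.rpow_mul ha0.le]
  congr 1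
  ring

lemma pf_aux_slope :
    Tendsto (fun x : ℝ => (1 - Real.exp (-x)) / x) (nhdsWithin 0 {(0:ℝ)}ᶜ) (nhds 1) := by
  have hg : HasDerivAt (fun x : ℝ => 1 - Real.exp (-x)) 1 0 := by
    have h := ((Real.hasDerivAt_exp (-(0:ℝ))).comp 0 ((hasDerivAt_id (0:ℝ)).neg)).const_sub 1
    simpa using h
  have h := hasDerivAt_iff_tendsto_slope.mp hg
  refine h.congr fun x => ?_
  simp [slope_def_field]

/-- in the supercritical case, for every `u > 0`,
`f^[n](exp(-u a^(n/θ))) → 1 - (u^(-θ) + b/(1-a))^(-1/θ)`; i.e. the Laplace transforms of the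
normalized populations `W_n = m^(-n) Z_n` (with `m = a^(-1/θ)`) converge to
`φ(u) = 1 - (u^(-θ) + b/(1-a))^(-1/θ)`. -/
theorem pf_martingale_limit_LT (θ a b : ℝ) (hθ : θ ∈ Set.Ioc (0:ℝ) 1)
    (ha : a ∈ Set.Ioo (0:ℝ) 1) (hb : 0 < b) (hab : 1 ≤ a + b) (f : ℝ → ℝ)
    (hf : ∀ s, f s = 1 - (a * (1 - s) ^ (-θ) + b) ^ (-1/θ)) :
    ∀ u : ℝ, 0 < u →
      Filter.Tendsto (fun n : ℕ => f^[n] (Real.exp (-u * a ^ ((n : ℝ) / θ))))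
        Filter.atTop (nhds (1 - (u ^ (-θ) + b / (1 - a)) ^ (-1/θ))) := by
  obtain ⟨hθ0, hθ1⟩ := hθ
  obtain ⟨ha0, ha1⟩ := ha
  have hθne : θ ≠ 0 := ne_of_gt hθ0
  have h1a : (0:ℝ) < 1 - a := by linarith
  intro u hu
  have hεpos : ∀ n : ℕ, 0 < u * a ^ ((n:ℝ)/θ) := fun n => by positivity
  -- rewrite the sequence using the iterate formula
  have hrw : ∀ n : ℕ, f^[n] (Real.exp (-u * a ^ ((n : ℝ) / θ)))
      = 1 - (a ^ n * (1 - Real.exp (-(u * a ^ ((n:ℝ)/θ)))) ^ (-θ)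
          + b * (1 - a ^ n) / (1 - a)) ^ (-1/θ) := by
    intro n
    have hlt : Real.exp (-u * a ^ ((n : ℝ) / θ)) < 1 := by
      rw [Real.exp_lt_one_iff]
      nlinarith [hεpos n]
    rw [pf_iter_formula θ a b hθ0 ha0 ha1 hb f hf n _ hlt]
    congr 4
    ring
  -- limit of the main term
  have hεne : Tendsto (fun n : ℕ => u * a ^ ((n:ℝ)/θ)) atTop (nhdsWithin 0 {(0:ℝ)}ᶜ) :=
    tendsto_nhdsWithin_of_tendsto_nhds_of_eventually_within _
      (pf_aux_eps θ a u hθ0 ha0 ha1)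
      (Eventually.of_forall fun n => by simp [(hεpos n).ne'])
  have ht : Tendsto (fun n : ℕ => (1 - Real.exp (-(u * a ^ ((n:ℝ)/θ)))) / (u * a ^ ((n:ℝ)/θ)))
      atTop (nhds 1) := pf_aux_slope.comp hεne
  have hut : Tendsto (fun n : ℕ =>
      u * ((1 - Real.exp (-(u * a ^ ((n:ℝ)/θ)))) / (u * a ^ ((n:ℝ)/θ)))) atTop (nhds u) := by
    have h := ht.const_mul u
    rwa [mul_one] at h
  have hcont : ContinuousAt (fun x : ℝ => x ^ (-θ)) u :=
    Real.continuousAt_rpow_const u (-θ) (Or.inl hu.ne')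
  have hT : Tendsto (fun n : ℕ => a ^ n * (1 - Real.exp (-(u * a ^ ((n:ℝ)/θ)))) ^ (-θ))
      atTop (nhds (u ^ (-θ))) := by
    have h := hcont.tendsto.comp hut
    exact h.congr fun n => (pf_aux_key θ a u hθ0 ha0 hu n).symm
  have hB : Tendsto (fun n : ℕ => b * (1 - a ^ n) / (1 - a)) atTop (nhds (b / (1 - a))) := by
    have hpow := tendsto_pow_atTop_nhds_zero_of_lt_one ha0.le ha1
    have h := (((tendsto_const_nhds (x := (1:ℝ))).sub hpow).const_mul b).div_const (1 - a)
    simpa using h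
  have hSum := hT.add hB
  have hLpos : 0 < u ^ (-θ) + b / (1 - a) := by
    have := Real.rpow_pos_of_pos hu (-θ)
    positivity
  have hcont2 : ContinuousAt (fun x : ℝ => x ^ (-1/θ)) (u ^ (-θ) + b / (1 - a)) :=
    Real.continuousAt_rpow_const _ _ (Or.inl hLpos.ne')
  have hfinal := (tendsto_const_nhds (x := (1:ℝ))).sub (hcont2.tendsto.comp hSum)
  exact hfinal.congr fun n => (hrw n).symm
end

section
/- Let θ ∈ (0,1], a ∈ (0,1) and b > 0 with a + b ≥ 1, let f(s) = 1 − (a·(1−s)^{−θ} + b)^{−1/θ}, and define φ(u) = 1 − (u^{−θ} + b/(1−a))^{−1/θ} for u > 0, with φ(0) = 1. Then φ satisfies Abel's functional equation φ(u) = f(φ(a^{1/θ}·u)) for all u ≥ 0. -/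
/-- the Laplace transform `φ(u) = 1 - (u^(-θ) + b/(1-a))^(-1/θ)` for `u > 0`,
with `φ(0) = 1`, satisfies Abel's functional equation `φ(u) = f(φ(a^(1/θ) u))` for all
`u ≥ 0`, where `f` is the pgf of `PF(θ,a,b)` (given by the power-fractional formula on
`[0,1)` and by `f 1 = 1`, `PF(θ,a,b)` being a proper distribution). -/
theorem pf_abel_equation (θ a b : ℝ) (hθ : θ ∈ Set.Ioc (0:ℝ) 1)
    (ha : a ∈ Set.Ioo (0:ℝ) 1) (hb : 0 < b) (hab : 1 ≤ a + b) (f φ : ℝ → ℝ)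
    (hf : ∀ s ∈ Set.Ico (0:ℝ) 1, f s = 1 - (a * (1 - s) ^ (-θ) + b) ^ (-1/θ))
    (hf1 : f 1 = 1)
    (hφ : ∀ u : ℝ, 0 < u → φ u = 1 - (u ^ (-θ) + b / (1 - a)) ^ (-1/θ))
    (hφ0 : φ 0 = 1) :
    ∀ u : ℝ, 0 ≤ u → φ u = f (φ (a ^ (1/θ) * u)) := by
  obtain ⟨hθ0, hθ1⟩ := hθ
  obtain ⟨ha0, ha1⟩ := ha
  have hθne : θ ≠ 0 := ne_of_gt hθ0
  intro u hu
  rcases eq_or_lt_of_le hu with h | hu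
  · simp [← h, hφ0, hf1]
  · have hv : 0 < a ^ (1/θ) * u := mul_pos (Real.rpow_pos_of_pos ha0 _) hu
    set v := a ^ (1/θ) * u with hvdef
    have h1a : 0 < 1 - a := by linarith
    have hc : (1:ℝ) ≤ b / (1 - a) := (one_le_div h1a).2 (by linarith)
    have hvp := Real.rpow_pos_of_pos hv (-θ)
    have hx : 0 < v ^ (-θ) + b / (1 - a) := by linarith
    have hx1 : 1 ≤ v ^ (-θ) + b / (1 - a) := by linarith
    have hφv : φ v = 1 - (v ^ (-θ) + b / (1 - a)) ^ (-1/θ) := hφ v hv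
    have hmem : φ v ∈ Set.Ico (0:ℝ) 1 := by
      constructor
      · rw [hφv]
        have h2 : (v ^ (-θ) + b / (1 - a)) ^ (-1/θ) ≤ 1 :=
          Real.rpow_le_one_of_one_le_of_nonpos hx1
            (by rw [neg_div]; exact neg_nonpos.2 (by positivity))
        linarith
      · rw [hφv]
        have := Real.rpow_pos_of_pos hx (-1/θ); linarith
    rw [hf _ hmem, hφv, hφ u hu]
    have key : (1 - (1 - (v ^ (-θ) + b/(1-a)) ^ (-1/θ))) ^ (-θ) = v ^ (-θ) + b/(1-a) := by
      have : (1 - (1 - (v ^ (-θ) + b/(1-a)) ^ (-1/θ))) = (v ^ (-θ) + b/(1-a)) ^ (-1/θ) := by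
        ring
      rw [this, ← Real.rpow_mul hx.le, show -1/θ * -θ = 1 by field_simp, Real.rpow_one]
    rw [key]
    have hva : v ^ (-θ) = a⁻¹ * u ^ (-θ) := by
      rw [hvdef, Real.mul_rpow (Real.rpow_pos_of_pos ha0 _).le hu.le,
        ← Real.rpow_mul ha0.le, show 1/θ * -θ = -1 by field_simp, Real.rpow_neg_one]
    rw [hva]
    have : a * (a⁻¹ * u ^ (-θ) + b / (1 - a)) + b = u ^ (-θ) + b / (1 - a) := by
      field_simp
      ring
    rw [this]
end

section
/- Let θ ∈ (0,1], a > 1 and b > 0, and let f(s) = 1 − (a·(1−s)^{−θ} + b)^{−1/θ}. Then lim_{n→∞} a^{n/θ}·(1 − f^{∘n}(0)) = ((a−1)/(a+b−1))^{1/θ}. In other words, the survival probability P(Z_n > 0) = 1 − f^{∘n}(0) of a subcritical Galton–Watson process with one ancestor and offspring law PF(θ,a,b) satisfies a^{n/θ}·P(Z_n > 0) → ((a−1)/(a+b−1))^{1/θ}. -/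
/-
In the coordinate `u = (1 - s)^(-θ)` the generating function `f` becomes the affine map
`u ↦ a u + b`, whose iterates are explicit: `u_n + b/(a-1) = aⁿ (u_0 + b/(a-1))`. Starting from
`s = 0`, i.e. `u_0 = 1`, this gives `1 - f^[n] 0 = u_n^(-1/θ)` with `a⁻ⁿ u_n → (a+b-1)/(a-1)`,
and the limit follows by continuity of `x ↦ x^(-1/θ)`.
-/

open Filter Topology

/-- `-b/(a-1)` is the fixed point of `x ↦ a x + b`, and the map multiplies distances to it by `a`. -/
theorem iterate_mul_add_add_div {K : Type*} [Field K] {a : K} (ha : a ≠ 1) (b u : K) (n : ℕ) :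
    (fun x => a * x + b)^[n] u + b / (a - 1) = a ^ n * (u + b / (a - 1)) := by
  have ha' : a - 1 ≠ 0 := sub_ne_zero.mpr ha
  induction n with
  | zero => simp
  | succ n ih =>
    rw [Function.iterate_succ_apply', pow_succ, mul_comm _ a, mul_assoc, ← ih]
    field_simp
    ring

theorem tendsto_inv_pow_mul_iterate_mul_add {a : ℝ} (ha : 1 < |a|) (b u : ℝ) :
    Tendsto (fun n : ℕ => (a ^ n)⁻¹ * (fun x => a * x + b)^[n] u) atTop
      (𝓝 (u + b / (a - 1))) := by
  have ha1 : a ≠ 1 := by rintro rfl; simp at ha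
  have ha0 : a ≠ 0 := by rintro rfl; norm_num at ha
  have hpow : Tendsto (fun n : ℕ => a⁻¹ ^ n) atTop (𝓝 0) :=
    tendsto_pow_atTop_nhds_zero_of_abs_lt_one (by rw [abs_inv]; exact inv_lt_one_of_one_lt₀ ha)
  have hform : ∀ n : ℕ, (a ^ n)⁻¹ * (fun x => a * x + b)^[n] u
      = u + b / (a - 1) - b / (a - 1) * a⁻¹ ^ n := by
    intro n
    rw [eq_sub_iff_add_eq, inv_pow, ← mul_comm (a ^ n)⁻¹, ← mul_add,
      iterate_mul_add_add_div ha1, inv_mul_cancel_left₀ (pow_ne_zero n ha0)]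
  simp only [hform]
  simpa using tendsto_const_nhds.sub (hpow.const_mul (b / (a - 1)))

theorem iterate_mul_add_pos {a b : ℝ} (ha : 0 < a) (hb : 0 ≤ b) {u : ℝ} (hu : 0 < u) (n : ℕ) :
    0 < (fun x => a * x + b)^[n] u :=
  Set.MapsTo.iterate (f := fun x => a * x + b) (s := Set.Ioi 0)
    (fun _ hx => add_pos_of_pos_of_nonneg (mul_pos ha hx) hb) n hu

section PowerFractional

variable {θ a b : ℝ} {f : ℝ → ℝ}

theorem pf_one_sub_rpow (hf : ∀ s, f s = 1 - (a * (1 - s) ^ (-θ) + b) ^ (-1 / θ))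
    (hθ : θ ≠ 0) {u : ℝ} (hu : 0 ≤ u) :
    f (1 - u ^ (-1 / θ)) = 1 - (a * u + b) ^ (-1 / θ) := by
  rw [hf, sub_sub_cancel, ← Real.rpow_mul hu, div_mul_eq_mul_div, neg_mul_neg, one_mul,
    div_self hθ, Real.rpow_one]

theorem pf_iterate_one_sub_rpow (hf : ∀ s, f s = 1 - (a * (1 - s) ^ (-θ) + b) ^ (-1 / θ))
    (hθ : θ ≠ 0) (ha : 0 < a) (hb : 0 ≤ b) (n : ℕ) {u : ℝ} (hu : 0 < u) :
    f^[n] (1 - u ^ (-1 / θ)) = 1 - ((fun x => a * x + b)^[n] u) ^ (-1 / θ) := by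
  induction n generalizing u with
  | zero => rfl
  | succ n ih =>
    rw [Function.iterate_succ_apply, pf_one_sub_rpow hf hθ hu.le,
      ih (add_pos_of_pos_of_nonneg (mul_pos ha hu) hb), Function.iterate_succ_apply]

end PowerFractional

/-- in the subcritical case `a > 1`, the survival probabilities
`P(Z_n > 0) = 1 - f^[n](0)` of the Galton-Watson process with offspring law `PF(θ,a,b)`
satisfy `a^(n/θ) (1 - f^[n](0)) → ((a-1)/(a+b-1))^(1/θ)`. -/
theorem pf_subcritical_survival (θ a b : ℝ) (hθ : θ ∈ Set.Ioc (0:ℝ) 1)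
    (ha : 1 < a) (hb : 0 < b) (f : ℝ → ℝ)
    (hf : ∀ s, f s = 1 - (a * (1 - s) ^ (-θ) + b) ^ (-1/θ)) :
    Filter.Tendsto (fun n : ℕ => a ^ ((n : ℝ) / θ) * (1 - f^[n] 0)) Filter.atTop
      (nhds (((a - 1) / (a + b - 1)) ^ (1/θ))) := by
  have hθ0 : θ ≠ 0 := hθ.1.ne'
  have ha0 : 0 < a := by linarith
  set L := fun x : ℝ => a * x + b
  have hL : ∀ n, 0 < L^[n] 1 := fun n => iterate_mul_add_pos ha0 hb.le one_pos n
  have hsurv : ∀ n : ℕ, a ^ ((n : ℝ) / θ) * (1 - f^[n] 0) = ((a ^ n)⁻¹ * L^[n] 1) ^ (-1 / θ) := by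
    intro n
    have h0 : f^[n] 0 = f^[n] (1 - 1 ^ (-1 / θ)) := by rw [Real.one_rpow, sub_self]
    rw [h0, pf_iterate_one_sub_rpow hf hθ0 ha0 hb.le n one_pos, sub_sub_cancel,
      Real.mul_rpow (by positivity) (hL n).le, Real.inv_rpow (by positivity), ← Real.rpow_natCast,
      ← Real.rpow_mul ha0.le, ← Real.rpow_neg ha0.le]
    congr 2
    field_simp
  have hlimit : (1 + b / (a - 1)) ^ (-1 / θ) = ((a - 1) / (a + b - 1)) ^ (1 / θ) := by
    have ha1 : 0 < a - 1 := by linarith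
    have hab : 0 < a + b - 1 := by linarith
    rw [show 1 + b / (a - 1) = ((a - 1) / (a + b - 1))⁻¹ by field_simp; ring,
      Real.inv_rpow (by positivity), ← Real.rpow_neg (by positivity), neg_div, neg_neg]
  simp only [hsurv, ← hlimit]
  exact (tendsto_inv_pow_mul_iterate_mul_add (by rwa [abs_of_pos ha0]) b 1).rpow_const
    (Or.inl (by positivity))
end

section
/- Let θ ∈ (0,1], a > 1 and b > 0, and let f(s) = 1 − (a·(1−s)^{−θ} + b)^{−1/θ}. Then for every s ∈ [0,1), the conditional generating function h_n(s) = (f^{∘n}(s) − f^{∘n}(0))/(1 − f^{∘n}(0)) converges as n → ∞ to 1 − (a'·(1−s)^{−θ} + b')^{−1/θ}, where a' = (a−1)/(a+b−1) and b' = b/(a+b−1). That is, the Yaglom quasi-stationary limit of a subcritical Galton–Watson process with offspring law PF(θ,a,b), conditioned on survival, is the power-fractional law PF(θ, (a−1)/(a+b−1), b/(a+b−1)). -/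
/-!
In the coordinate `x = (1 - s) ^ (-θ)` the generating function `f` of `PF(θ, a, b)` acts as
the affine map `x ↦ a * x + b`, so `f^[n]` acts as its `n`-th iterate
`x ↦ aⁿ (x - p) + p`, where `p = b / (1 - a)` is the fixed point. Conditioning on survival
divides the coordinates of `s` and of `0`, and for `a > 1` the ratio of the two iterates tends
to `(x - p) / (1 - p)`, which is the coordinate of `s` under `PF(θ, a', b')`.
-/

open Filter Set Topology

theorem Function.iterate_apply_eq_of_mapsTo {α β : Type*} {f : α → α} {g : β → β} {ψ : β → α}
    {S : Set β} (hS : MapsTo g S S) (h : ∀ x ∈ S, f (ψ x) = ψ (g x)) (n : ℕ) :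
    ∀ x ∈ S, f^[n] (ψ x) = ψ (g^[n] x) := by
  induction n with
  | zero => simp
  | succ n ih =>
    intro x hx
    rw [Function.iterate_succ_apply, Function.iterate_succ_apply, h x hx, ih _ (hS hx)]

theorem affine_iterate_apply {R : Type*} [CommRing R] {a b p : R} (hp : a * p + b = p)
    (n : ℕ) (x : R) : (fun y => a * y + b)^[n] x = a ^ n * (x - p) + p := by
  induction n with
  | zero => simp
  | succ n ih =>
    rw [Function.iterate_succ_apply', ih]
    linear_combination hp

theorem affine_mapsTo_Ioi {a b : ℝ} (ha : 0 < a) (hb : 0 ≤ b) :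
    MapsTo (fun y => a * y + b) (Ioi 0) (Ioi 0) :=
  fun _ hy => add_pos_of_pos_of_nonneg (mul_pos ha hy) hb

theorem tendsto_mul_add_div_mul_add {α : Type*} {l : Filter α} {c : α → ℝ}
    (hc : Tendsto c l atTop) (p q r q' : ℝ) (hr : r ≠ 0) :
    Tendsto (fun n => (c n * p + q) / (c n * r + q')) l (𝓝 (p / r)) := by
  have hinv : Tendsto (fun n => (c n)⁻¹) l (𝓝 0) := hc.inv_tendsto_atTop
  have hlim : Tendsto (fun n => (p + q * (c n)⁻¹) / (r + q' * (c n)⁻¹)) l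
      (𝓝 ((p + q * 0) / (r + q' * 0))) :=
    (tendsto_const_nhds.add (tendsto_const_nhds.mul hinv)).div
      (tendsto_const_nhds.add (tendsto_const_nhds.mul hinv)) (by simpa using hr)
  rw [mul_zero, add_zero, mul_zero, add_zero] at hlim
  refine hlim.congr' ?_
  filter_upwards [hc.eventually_gt_atTop 0] with n hn
  rw [← mul_div_mul_left _ _ hn.ne']
  field_simp

theorem tendsto_affine_iterate_div_iterate_one {a b : ℝ} (ha : 1 < a) (hab : a + b - 1 ≠ 0)
    (x : ℝ) :
    Tendsto (fun n : ℕ => (fun y => a * y + b)^[n] x / (fun y => a * y + b)^[n] 1) atTop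
      (𝓝 ((a - 1) / (a + b - 1) * x + b / (a + b - 1))) := by
  have ha1 : 1 - a ≠ 0 := sub_ne_zero.2 ha.ne
  have hab' : 1 - a - b ≠ 0 := by contrapose! hab; linarith
  set p := b / (1 - a) with hp_def
  have hp : a * p + b = p := by rw [hp_def]; field_simp; ring
  have hp1 : 1 - p ≠ 0 := by
    rw [one_sub_div ha1]
    exact div_ne_zero hab' ha1
  have hlim := tendsto_mul_add_div_mul_add (tendsto_pow_atTop_atTop_of_one_lt ha)
    (x - p) p (1 - p) p hp1
  simp only [affine_iterate_apply hp]
  convert hlim using 2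
  rw [hp_def]
  field_simp
  ring

namespace PowerFractional

/-- Inverse of the coordinate `s ↦ (1 - s) ^ (-θ)` in which `PF(θ, a, b)` is affine. -/
noncomputable def fromCoord (θ x : ℝ) : ℝ := 1 - x ^ (-1 / θ)

theorem neg_one_div_eq_inv_neg (θ : ℝ) : -1 / θ = (-θ)⁻¹ := by
  rw [neg_div, one_div, inv_neg]

variable {θ : ℝ}

theorem one_sub_fromCoord_rpow (hθ : θ ≠ 0) {x : ℝ} (hx : 0 ≤ x) :
    (1 - fromCoord θ x) ^ (-θ) = x := by
  rw [fromCoord, sub_sub_cancel, neg_one_div_eq_inv_neg, Real.rpow_inv_rpow hx (neg_ne_zero.2 hθ)]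

theorem fromCoord_rpow (hθ : θ ≠ 0) {s : ℝ} (hs : s < 1) : fromCoord θ ((1 - s) ^ (-θ)) = s := by
  rw [fromCoord, neg_one_div_eq_inv_neg,
    Real.rpow_rpow_inv (sub_nonneg.2 hs.le) (neg_ne_zero.2 hθ), sub_sub_cancel]

@[simp]
theorem fromCoord_one : fromCoord θ 1 = 0 := by
  simp [fromCoord]

theorem fromCoord_sub_div_one_sub {x y : ℝ} (hx : 0 ≤ x) (hy : 0 < y) :
    (fromCoord θ x - fromCoord θ y) / (1 - fromCoord θ y) = fromCoord θ (x / y) := by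
  have hy' : y ^ (-1 / θ) ≠ 0 := (Real.rpow_pos_of_pos hy _).ne'
  rw [fromCoord, fromCoord, fromCoord, sub_sub_sub_cancel_left, sub_sub_cancel,
    Real.div_rpow hx hy.le, sub_div, div_self hy']

theorem continuousAt_fromCoord {x : ℝ} (hx : x ≠ 0) : ContinuousAt (fromCoord θ) x :=
  continuousAt_const.sub (Real.continuousAt_rpow_const _ _ (Or.inl hx))

theorem iterate_fromCoord (hθ : θ ≠ 0) {a b : ℝ} (ha : 0 < a) (hb : 0 ≤ b) {f : ℝ → ℝ}
    (hf : ∀ s, f s = 1 - (a * (1 - s) ^ (-θ) + b) ^ (-1 / θ)) (n : ℕ) {x : ℝ} (hx : 0 < x) :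
    f^[n] (fromCoord θ x) = fromCoord θ ((fun y => a * y + b)^[n] x) := by
  refine Function.iterate_apply_eq_of_mapsTo (affine_mapsTo_Ioi ha hb) (fun y hy => ?_) n x hx
  rw [hf, one_sub_fromCoord_rpow hθ (le_of_lt hy), fromCoord]

end PowerFractional

open PowerFractional

/-- in the subcritical case `a > 1`, the conditional generating functions
`h_n(s) = (f^[n](s) - f^[n](0))/(1 - f^[n](0))` converge pointwise on `[0,1)` to the pgf of
`PF(θ, (a-1)/(a+b-1), b/(a+b-1))` (the Yaglom quasi-stationary limit law). -/
theorem pf_yaglom_limit (θ a b : ℝ) (hθ : θ ∈ Set.Ioc (0:ℝ) 1)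
    (ha : 1 < a) (hb : 0 < b) (f : ℝ → ℝ)
    (hf : ∀ s, f s = 1 - (a * (1 - s) ^ (-θ) + b) ^ (-1/θ)) :
    ∀ s ∈ Set.Ico (0:ℝ) 1,
      Filter.Tendsto (fun n : ℕ => (f^[n] s - f^[n] 0) / (1 - f^[n] 0)) Filter.atTop
        (nhds (1 - ((a - 1) / (a + b - 1) * (1 - s) ^ (-θ) + b / (a + b - 1)) ^ (-1/θ))) := by
  rintro s ⟨-, hs⟩
  have hθ0 : θ ≠ 0 := hθ.1.ne'
  have ha0 : 0 < a := zero_lt_one.trans ha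
  set g : ℝ → ℝ := fun y => a * y + b
  obtain ⟨u, hu, rfl⟩ : ∃ u > 0, s = fromCoord θ u :=
    ⟨_, Real.rpow_pos_of_pos (sub_pos.2 hs) _, (fromCoord_rpow hθ0 hs).symm⟩
  have hg_pos (n : ℕ) {x : ℝ} (hx : 0 < x) : 0 < g^[n] x :=
    (affine_mapsTo_Ioi ha0 hb.le).iterate n hx
  have hcond (n : ℕ) : (f^[n] (fromCoord θ u) - f^[n] 0) / (1 - f^[n] 0)
      = fromCoord θ (g^[n] u / g^[n] 1) := by
    rw [← fromCoord_one (θ := θ), iterate_fromCoord hθ0 ha0 hb.le hf n hu,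
      iterate_fromCoord hθ0 ha0 hb.le hf n one_pos,
      fromCoord_sub_div_one_sub (hg_pos n hu).le (hg_pos n one_pos)]
  have hab : 0 < a + b - 1 := by linarith
  have hlim_pos : 0 < (a - 1) / (a + b - 1) * u + b / (a + b - 1) :=
    add_pos (mul_pos (div_pos (by linarith) hab) hu) (div_pos hb hab)
  rw [one_sub_fromCoord_rpow hθ0 hu.le]
  exact ((continuousAt_fromCoord hlim_pos.ne').tendsto.comp
    (tendsto_affine_iterate_div_iterate_one ha hab.ne' u)).congr fun n => (hcond n).symm
end

section
/- Let θ ∈ (0,1] and b > 0, and let f(s) = 1 − ((1−s)^{−θ} + b)^{−1/θ}. Then for every u > 0, lim_{n→∞} (f^{∘n}(exp(−u/(bn)^{1/θ})) − f^{∘n}(0))/(1 − f^{∘n}(0)) = 1 − (u^{−θ} + 1)^{−1/θ}. Equivalently, for the critical Galton–Watson process (Z_n) with offspring law PF(θ,1,b), the conditional law of Z_n/(bn)^{1/θ} given Z_n > 0 converges weakly to the continuous power-fractional law CPF₊(θ,1). -/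
/-! The substitution `s ↦ (1 - s) ^ (-θ)` conjugates the pgf `f` to the translation `x ↦ x + b`,
so `f^[n]` is explicit. With `N = b n` and `s = exp (-u / N ^ (1/θ))` the Yaglom ratio becomes
`1 - (((N ^ (1/θ) (1 - s)) ^ (-θ) + 1) / (N⁻¹ + 1)) ^ (-1/θ)`, and `N ^ (1/θ) (1 - s) → u`
because `x (1 - exp (-u / x)) → u` as `x → ∞` (the derivative of `t ↦ 1 - exp (-u t)` at `0`). -/

open Filter Topology Real

theorem Real.tendsto_mul_one_sub_exp_neg_div_atTop (u : ℝ) :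
    Tendsto (fun x : ℝ => x * (1 - exp (-u / x))) atTop (𝓝 u) := by
  have hderiv : HasDerivAt (fun t => 1 - exp (-u * t)) u 0 := by
    simpa using (((hasDerivAt_id 0).const_mul (-u)).exp).const_sub 1
  refine (hderiv.tendsto_slope_zero_right.comp tendsto_inv_atTop_nhdsGT_zero).congr' ?_
  filter_upwards [eventually_ne_atTop 0] with x hx
  simp [div_eq_mul_inv]

theorem powerFractional_iterate {θ b : ℝ} (hθ : θ ≠ 0) (hb : 0 ≤ b) {f : ℝ → ℝ}
    (hf : ∀ s, f s = 1 - ((1 - s) ^ (-θ) + b) ^ (-1/θ)) (n : ℕ) {s : ℝ} (hs : s < 1) :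
    f^[n] s = 1 - ((1 - s) ^ (-θ) + b * n) ^ (-1/θ) := by
  have hexp : -1/θ = (-θ)⁻¹ := by ring
  have hs' : 0 ≤ 1 - s := by linarith
  induction n with
  | zero =>
    rw [Function.iterate_zero_apply, Nat.cast_zero, mul_zero, add_zero, hexp,
      rpow_rpow_inv hs' (neg_ne_zero.mpr hθ), sub_sub_cancel]
  | succ n ih =>
    have hX : 0 ≤ (1 - s) ^ (-θ) + b * n := by positivity
    rw [Function.iterate_succ_apply', ih, hf, sub_sub_cancel, hexp,
      rpow_inv_rpow hX (neg_ne_zero.mpr hθ)]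
    push_cast
    ring_nf

theorem one_sub_rpow_sub_div_eq_one_sub_div_rpow {x y : ℝ} (r : ℝ) (hx : 0 ≤ x) (hy : 0 < y) :
    (1 - x ^ r - (1 - y ^ r)) / (1 - (1 - y ^ r)) = 1 - (x / y) ^ r := by
  rw [sub_sub_cancel, sub_sub_sub_cancel_left, div_rpow hx hy.le, sub_div,
    div_self (rpow_pos_of_pos hy r).ne']

theorem rpow_neg_add_div_one_add_eq {θ N x : ℝ} (hθ : θ ≠ 0) (hN : 0 < N) (hx : 0 ≤ x) :
    (x ^ (-θ) + N) / (1 + N) = ((N ^ (1/θ) * x) ^ (-θ) + 1) / (N⁻¹ + 1) := by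
  have hexp : 1/θ * -θ = -1 := by field_simp
  rw [mul_rpow (by positivity) hx, ← rpow_mul hN.le, hexp, rpow_neg_one]
  field_simp

/-- Kolmogorov-Yaglom limit in the critical case. For the critical
power-fractional law `PF(θ,1,b)` with pgf `f(s) = 1 - ((1-s)^(-θ) + b)^(-1/θ)` and every
`u > 0`, `(f^[n](exp(-u/(bn)^(1/θ))) - f^[n](0))/(1 - f^[n](0)) → 1 - (u^(-θ) + 1)^(-1/θ)`;
i.e. the law of `Z_n/(bn)^(1/θ)` given `Z_n > 0` converges weakly to `CPF₊(θ,1)`. -/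
theorem pf_critical_yaglom (θ b : ℝ) (hθ : θ ∈ Set.Ioc (0:ℝ) 1) (hb : 0 < b)
    (f : ℝ → ℝ) (hf : ∀ s, f s = 1 - ((1 - s) ^ (-θ) + b) ^ (-1/θ)) :
    ∀ u : ℝ, 0 < u →
      Filter.Tendsto
        (fun n : ℕ =>
          (f^[n] (Real.exp (-u / (b * n) ^ (1/θ))) - f^[n] 0) / (1 - f^[n] 0))
        Filter.atTop (nhds (1 - (u ^ (-θ) + 1) ^ (-1/θ))) := by
  intro u hu
  have hθ0 : θ ≠ 0 := hθ.1.ne'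
  have hN : Tendsto (fun n : ℕ => b * n) atTop atTop :=
    tendsto_natCast_atTop_atTop.const_mul_atTop hb
  have hscaled := (tendsto_mul_one_sub_exp_neg_div_atTop u).comp
    ((tendsto_rpow_atTop (one_div_pos.mpr hθ.1)).comp hN)
  have hratio : Tendsto (fun n : ℕ =>
      ((((b * n) ^ (1/θ) * (1 - exp (-u / (b * n) ^ (1/θ)))) ^ (-θ) + 1) / ((b * n)⁻¹ + 1)))
      atTop (𝓝 (u ^ (-θ) + 1)) := by
    simpa [Pi.div_def] using ((hscaled.rpow_const (p := -θ) (.inl hu.ne')).add_const 1).div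
      ((tendsto_inv_atTop_zero.comp hN).add_const 1) (by norm_num)
  refine ((hratio.rpow_const (.inl (by positivity))).const_sub 1).congr' ?_
  filter_upwards [eventually_gt_atTop 0] with n hn
  have hbn : 0 < b * n := by positivity
  have hs : exp (-u / (b * n) ^ (1/θ)) < 1 :=
    exp_lt_one_iff.mpr (div_neg_of_neg_of_pos (by linarith) (by positivity))
  rw [powerFractional_iterate hθ0 hb.le hf n hs, powerFractional_iterate hθ0 hb.le hf n one_pos,
    sub_zero, one_rpow, one_sub_rpow_sub_div_eq_one_sub_div_rpow _ (by positivity) (by positivity),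
    rpow_neg_add_div_one_add_eq hθ0 hbn (by linarith)]
end

section
/- Let θ ∈ (0,1], α > 0, β ≥ 1, a ∈ (0,1] and b > 0 with b ≥ 1 − a. Let f(s) = 1 − (a·(1−s)^{−θ} + b)^{−1/θ} (the pgf of PF(θ,a,b)) and φ(u) = 1 − (α·u^{−θ} + β)^{−1/θ} for u > 0 (the Laplace transform of CPF(θ,α,β)). Then for all u > 0, f(φ(u)) = 1 − (aα·u^{−θ} + aβ + b)^{−1/θ}. Hence, if N ~ PF(θ,a,b) and Y_1, Y_2, … are iid ~ CPF(θ,α,β), all independent, then ∑_{k=1}^{N} Y_k ~ CPF(θ, aα, aβ + b). -/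
/-!
Composition works at the level of `(1 - ·)^(-θ)`: the Laplace transform satisfies
`(1 - φ u)^(-θ) = α u^(-θ) + β`, and `f` is obtained by applying `t ↦ 1 - (a t + b)^(-1/θ)` to
`(1 - s)^(-θ)`. Hence `f (φ u) = 1 - (a (α u^(-θ) + β) + b)^(-1/θ)`. The only care needed is that
`φ u` lies in `[0, 1)`, where the formula for `f` is available; this holds since
`α u^(-θ) + β ≥ 1`.
-/

open Real

lemma one_sub_rpow_neg_one_div_mem_Ico {θ x : ℝ} (hθ : 0 < θ) (hx : 1 ≤ x) :
    1 - x ^ (-1 / θ) ∈ Set.Ico (0 : ℝ) 1 := by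
  have hpos : 0 < x ^ (-1 / θ) := rpow_pos_of_pos (by linarith) _
  have hle : x ^ (-1 / θ) ≤ 1 :=
    rpow_le_one_of_one_le_of_nonpos hx (div_nonpos_of_nonpos_of_nonneg (by norm_num) hθ.le)
  constructor <;> linarith

lemma one_sub_one_sub_rpow_neg_one_div_rpow_neg {θ x : ℝ} (hθ : θ ≠ 0) (hx : 0 ≤ x) :
    (1 - (1 - x ^ (-1 / θ))) ^ (-θ) = x := by
  rw [sub_sub_cancel, neg_div, one_div, ← inv_neg, rpow_inv_rpow hx (neg_ne_zero.2 hθ)]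

theorem pf_random_sum_cpf_general (θ α β a b : ℝ) (hθ : θ ∈ Set.Ioc (0:ℝ) 1)
    (hα : 0 < α) (hβ : 1 ≤ β)
    (f φ : ℝ → ℝ)
    (hf : ∀ s ∈ Set.Ico (0:ℝ) 1, f s = 1 - (a * (1 - s) ^ (-θ) + b) ^ (-1/θ))
    (hφ : ∀ u : ℝ, 0 < u → φ u = 1 - (α * u ^ (-θ) + β) ^ (-1/θ)) :
    ∀ u : ℝ, 0 < u → f (φ u) = 1 - (a * α * u ^ (-θ) + (a * β + b)) ^ (-1/θ) := by
  intro u hu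
  have hx : 1 ≤ α * u ^ (-θ) + β := le_add_of_nonneg_of_le (by positivity) hβ
  rw [hφ u hu, hf _ (one_sub_rpow_neg_one_div_mem_Ico hθ.1 hx),
    one_sub_one_sub_rpow_neg_one_div_rpow_neg hθ.1.ne' (by linarith)]
  ring_nf

/-- random sums. If `f` is the pgf of `PF(θ,a,b)` and `φ` the Laplace transform
of `CPF(θ,α,β)`, then `f(φ(u)) = 1 - (aα u^(-θ) + aβ + b)^(-1/θ)` for `u > 0`; hence a
`PF(θ,a,b)`-sum of iid `CPF(θ,α,β)` variables has law `CPF(θ, aα, aβ + b)`. -/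
theorem pf_random_sum_cpf (θ α β a b : ℝ) (hθ : θ ∈ Set.Ioc (0:ℝ) 1)
    (hα : 0 < α) (hβ : 1 ≤ β) (ha : a ∈ Set.Ioc (0:ℝ) 1) (hb : 0 < b) (hab : 1 - a ≤ b)
    (f φ : ℝ → ℝ)
    (hf : ∀ s ∈ Set.Ico (0:ℝ) 1, f s = 1 - (a * (1 - s) ^ (-θ) + b) ^ (-1/θ))
    (hφ : ∀ u : ℝ, 0 < u → φ u = 1 - (α * u ^ (-θ) + β) ^ (-1/θ)) :
    ∀ u : ℝ, 0 < u → f (φ u) = 1 - (a * α * u ^ (-θ) + (a * β + b)) ^ (-1/θ) :=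
  pf_random_sum_cpf_general θ α β a b hθ hα hβ f φ hf hφ
end

section
/- Let θ ∈ (0,1]. Define h(s) = 1 − (1−s)^θ for s ∈ [0,1] (the probability generating function of the Sibuya distribution Sib(θ)) and φ(u) = 1 − (u^θ/(u^θ + 1))^{1/θ} for u ≥ 0 (the Laplace transform of CPF₊(θ,1)). Then for all u ≥ 0, h(φ(u)) = 1/(1 + u^θ), the Laplace transform of the Mittag-Leffler distribution of order θ. Hence if S ~ Sib(θ) and Y_1, Y_2, … are iid ~ CPF₊(θ,1), all independent, then ∑_{n=1}^{S} Y_n has the Mittag-Leffler distribution of order θ. -/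
/-- a Sibuya(θ) sum of iid `CPF₊(θ,1)` variables is Mittag-Leffler of order
`θ`: with `h(s) = 1 - (1-s)^θ` (the Sibuya pgf) and `φ(u) = 1 - (u^θ/(u^θ+1))^(1/θ)` (the
Laplace transform of `CPF₊(θ,1)`), one has `h(φ(u)) = 1/(1 + u^θ)` for all `u ≥ 0`. -/
theorem sibuya_sum_cpf_mittagleffler (θ : ℝ) (hθ : θ ∈ Set.Ioc (0:ℝ) 1)
    (h φ : ℝ → ℝ)
    (hh : ∀ s ∈ Set.Icc (0:ℝ) 1, h s = 1 - (1 - s) ^ θ)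
    (hφ : ∀ u : ℝ, 0 ≤ u → φ u = 1 - (u ^ θ / (u ^ θ + 1)) ^ (1/θ)) :
    ∀ u : ℝ, 0 ≤ u → h (φ u) = 1 / (1 + u ^ θ) := by
  intro u hu
  obtain ⟨hθ0, hθ1⟩ := hθ
  have hut : (0:ℝ) ≤ u ^ θ := Real.rpow_nonneg hu θ
  have hden : (0:ℝ) < u ^ θ + 1 := by linarith
  set x : ℝ := u ^ θ / (u ^ θ + 1) with hx
  have hx0 : 0 ≤ x := div_nonneg hut hden.le
  have hx1 : x ≤ 1 := by
    rw [hx, div_le_one hden]; linarith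
  have hr0 : 0 ≤ x ^ (1/θ) := Real.rpow_nonneg hx0 _
  have hr1 : x ^ (1/θ) ≤ 1 := Real.rpow_le_one hx0 hx1 (by positivity)
  have hmem : φ u ∈ Set.Icc (0:ℝ) 1 := by
    rw [hφ u hu]; constructor <;> [linarith; linarith]
  rw [hh _ hmem, hφ u hu]
  have hpow : (x ^ (1/θ)) ^ θ = x := by
    rw [← Real.rpow_mul hx0, one_div, inv_mul_cancel₀ hθ0.ne', Real.rpow_one]
  have : 1 - (1 - (1 - x ^ (1/θ))) ^ θ = 1 - x := by
    rw [sub_sub_cancel, hpow]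
  rw [this, hx]
  field_simp
  ring
end

section
/- Let θ ∈ (0,1] and a, b > 0 with a + b ≥ 1, and let X be a random variable with law PF(θ,a,b). Then the conditional law of X given X > 0 is PF(θ, a/(a+b), b/(a+b)). Equivalently, with f the pgf of PF(θ,a,b), the function h(s) = (f(s) − f(0))/(1 − f(0)) satisfies (1 − h(s))^{−θ} = (a·(1−s)^{−θ} + b)/(a + b) for all s ∈ [0,1). -/
/-! Writing `u = (1 - s)^(-θ)`, the PF pgf is `f = 1 - (a u + b)^(-1/θ)`, and conditioning on
`X > 0` replaces `1 - f(s)` by `(1 - f(s)) / (1 - f(0))`. Since `u = 1` at `s = 0`, this quotient is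
`((a u + b) / (a + b))^(-1/θ)`, which is `1 - f` for the parameters `(a/(a+b), b/(a+b))`. -/

lemma sub_div_one_sub_eq_one_sub {x y : ℝ} (hy : y ≠ 1) :
    (x - y) / (1 - y) = 1 - (1 - x) / (1 - y) := by
  have : 1 - y ≠ 0 := sub_ne_zero.mpr hy.symm
  field_simp
  ring

namespace PowerFractional

noncomputable def pgf (θ a b s : ℝ) : ℝ :=
  1 - (a * (1 - s) ^ (-θ) + b) ^ (-1/θ)

variable {θ a b s : ℝ}

lemma one_sub_pgf : 1 - pgf θ a b s = (a * (1 - s) ^ (-θ) + b) ^ (-1/θ) := by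
  rw [pgf, sub_sub_cancel]

lemma one_sub_pgf_zero : 1 - pgf θ a b 0 = (a + b) ^ (-1/θ) := by
  rw [one_sub_pgf, sub_zero, Real.one_rpow, mul_one]

lemma one_sub_pgf_rpow_neg (hθ : θ ≠ 0) (ha : 0 ≤ a) (hb : 0 ≤ b) (hs : s ≤ 1) :
    (1 - pgf θ a b s) ^ (-θ) = a * (1 - s) ^ (-θ) + b := by
  have hexp : -1/θ = (-θ)⁻¹ := by rw [inv_neg, neg_div, one_div]
  have hu : 0 ≤ (1 - s) ^ (-θ) := Real.rpow_nonneg (sub_nonneg.mpr hs) _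
  rw [one_sub_pgf, hexp, Real.rpow_inv_rpow (by positivity) (neg_ne_zero.mpr hθ)]

lemma pgf_conditional (ha : 0 ≤ a) (hb : 0 ≤ b) (hab : 0 < a + b) (hs : s ≤ 1) :
    (pgf θ a b s - pgf θ a b 0) / (1 - pgf θ a b 0) = pgf θ (a / (a + b)) (b / (a + b)) s := by
  have hu : 0 ≤ (1 - s) ^ (-θ) := Real.rpow_nonneg (sub_nonneg.mpr hs) _
  have hf0 : pgf θ a b 0 ≠ 1 := by
    rw [ne_comm, ← sub_ne_zero, one_sub_pgf_zero]
    exact (Real.rpow_pos_of_pos hab _).ne'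
  rw [sub_div_one_sub_eq_one_sub hf0, one_sub_pgf, one_sub_pgf_zero,
    ← Real.div_rpow (by positivity) hab.le, pgf, add_div, mul_div_right_comm]

end PowerFractional

open PowerFractional in
theorem pf_conditional_law_general (θ a b : ℝ) (hθ : θ ∈ Set.Ioc (0:ℝ) 1)
    (ha : 0 < a) (hb : 0 < b) (f h : ℝ → ℝ)
    (hf : ∀ s ∈ Set.Ico (0:ℝ) 1, f s = 1 - (a * (1 - s) ^ (-θ) + b) ^ (-1/θ))
    (hh : ∀ s ∈ Set.Ico (0:ℝ) 1, h s = (f s - f 0) / (1 - f 0)) :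
    ∀ s ∈ Set.Ico (0:ℝ) 1,
      (1 - h s) ^ (-θ) = (a * (1 - s) ^ (-θ) + b) / (a + b) ∧
      h s = 1 - (a / (a + b) * (1 - s) ^ (-θ) + b / (a + b)) ^ (-1/θ) := by
  intro s hs
  have hs1 : s ≤ 1 := hs.2.le
  have hθ0 : θ ≠ 0 := hθ.1.ne'
  have hab : 0 < a + b := add_pos ha hb
  have hhs : h s = pgf θ (a / (a + b)) (b / (a + b)) s := by
    rw [hh s hs, hf s hs, hf 0 ⟨le_rfl, zero_lt_one⟩]
    exact pgf_conditional ha.le hb.le hab hs1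
  refine ⟨?_, hhs⟩
  rw [hhs, one_sub_pgf_rpow_neg hθ0 (by positivity) (by positivity) hs1]
  ring

/-- conditioning on positivity. If `f` is the pgf of `PF(θ,a,b)` and
`h(s) = (f(s) - f(0))/(1 - f(0))` is the pgf of the conditional law given `X > 0`, then
`(1 - h(s))^(-θ) = (a (1-s)^(-θ) + b)/(a+b)`; i.e. the conditional law is
`PF(θ, a/(a+b), b/(a+b))`. -/
theorem pf_conditional_law (θ a b : ℝ) (hθ : θ ∈ Set.Ioc (0:ℝ) 1)
    (ha : 0 < a) (hb : 0 < b) (hab : 1 ≤ a + b) (f h : ℝ → ℝ)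
    (hf : ∀ s ∈ Set.Ico (0:ℝ) 1, f s = 1 - (a * (1 - s) ^ (-θ) + b) ^ (-1/θ))
    (hh : ∀ s ∈ Set.Ico (0:ℝ) 1, h s = (f s - f 0) / (1 - f 0)) :
    ∀ s ∈ Set.Ico (0:ℝ) 1,
      (1 - h s) ^ (-θ) = (a * (1 - s) ^ (-θ) + b) / (a + b) ∧
      h s = 1 - (a / (a + b) * (1 - s) ^ (-θ) + b / (a + b)) ^ (-1/θ) :=
  pf_conditional_law_general θ a b hθ ha hb f h hf hh
end

section
/- Let θ ∈ (0,1] and a, b > 0 with a + b ≥ 1, let X, I_1, I_2, … be independent random variables where X ~ PF(θ,a,b) and the I_k take values in a countable label set L with common law (γ_i)_{i∈L}. Then for each i ∈ L with γ_i > 0, the thinned count Z(i) = ∑_{k=1}^{X} 1{I_k = i} has the power-fractional law PF(θ, a·γ_i^{−θ}, b). Equivalently, with f the pgf of PF(θ,a,b) and g_i(s) = γ_i·s + 1 − γ_i the Bernoulli(γ_i) pgf, one has f(g_i(s)) = 1 − (a·γ_i^{−θ}·(1−s)^{−θ} + b)^{−1/θ} for all s ∈ [0,1). -/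
/-- thinning/tagging. If `f` is the pgf of `PF(θ,a,b)` and
`g(s) = γ s + 1 - γ` is the Bernoulli(γ) pgf (`0 < γ ≤ 1`), then
`f(g(s)) = 1 - (a γ^(-θ) (1-s)^(-θ) + b)^(-1/θ)`; i.e. the thinned count
`Z(i) = ∑_{k=1}^X 1{I_k = i}` has law `PF(θ, a γ^(-θ), b)`. -/
theorem pf_thinning (θ a b γ : ℝ) (hθ : θ ∈ Set.Ioc (0:ℝ) 1)
    (ha : 0 < a) (hb : 0 < b) (hab : 1 ≤ a + b) (hγ : 0 < γ) (hγ1 : γ ≤ 1)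
    (f : ℝ → ℝ)
    (hf : ∀ s ∈ Set.Ico (0:ℝ) 1, f s = 1 - (a * (1 - s) ^ (-θ) + b) ^ (-1/θ)) :
    ∀ s ∈ Set.Ico (0:ℝ) 1,
      f (γ * s + 1 - γ) = 1 - (a * γ ^ (-θ) * (1 - s) ^ (-θ) + b) ^ (-1/θ) := by
  intro s hs
  obtain ⟨hs0, hs1⟩ := hs
  have hmem : γ * s + 1 - γ ∈ Set.Ico (0:ℝ) 1 := by
    constructor
    · nlinarith
    · nlinarith
  rw [hf _ hmem]
  have h1 : 1 - (γ * s + 1 - γ) = γ * (1 - s) := by ring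
  rw [h1, Real.mul_rpow hγ.le (by linarith)]
  ring_nf
end

section
/- Let θ ∈ (0,1], a ∈ (0,1) and b > 1 − a, let f be the pgf of PF(θ,a,b), and set q = 1 − ((1−a)/b)^{1/θ} ∈ (0,1), the extinction probability of the associated supercritical Galton–Watson process. Then: (i) the Harris–Sevastyanov transform g(s) = f(qs)/q satisfies (q^{−1} − g(s))^{−θ} = a·(q^{−1} − s)^{−θ} + b·q^θ for s ∈ [0,1], i.e. the individuals with finite line of descent, conditioned on extinction, reproduce according to the power-fractional law PF(θ, q^{−1}, a, b·q^θ); and (ii) the function h(s) = (f(q + (1−q)s) − q)/(1−q) satisfies (1 − h(s))^{−θ} = a·(1−s)^{−θ} + (1−a) for s ∈ [0,1), i.e. the individuals with infinite line of descent, conditioned on survival, reproduce according to PF₊(θ,a) = PF(θ, a, 1−a). -/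
/-!
Writing `φ(s) = (1 - s)^(-θ)`, the pgf of `PF(θ,a,b)` is characterised by `φ(f s) = a φ(s) + b`.
Both transforms have the form `(1 - f t) / c` with `1 - t = c u` (`c = q`, `u = q⁻¹ - s` for `g`;
`c = 1 - q`, `u = 1 - s` for `h`), and raising to the power `-θ` pulls the factor `c` out as `c^θ`,
which leaves `a u^(-θ) + b c^θ`. For `h`, `c = ((1-a)/b)^(1/θ)`, so `b c^θ = 1 - a`.
-/

open Real

lemma rpow_neg_div_eq_of_rpow_neg_eq {θ a b c u y : ℝ} (hc : 0 < c) (hu : 0 ≤ u) (hy : 0 ≤ y)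
    (h : y ^ (-θ) = a * (c * u) ^ (-θ) + b) :
    (y / c) ^ (-θ) = a * u ^ (-θ) + b * c ^ θ := by
  have hcθ : c ^ (-θ) * c ^ θ = 1 := by
    rw [← rpow_add hc, neg_add_cancel, rpow_zero]
  calc (y / c) ^ (-θ) = y ^ (-θ) * c ^ θ := by
        rw [div_rpow hy hc.le, rpow_neg hc.le θ, div_inv_eq_mul]
    _ = a * u ^ (-θ) * (c ^ (-θ) * c ^ θ) + b * c ^ θ := by
        rw [h, mul_rpow hc.le hu]; ring
    _ = a * u ^ (-θ) + b * c ^ θ := by rw [hcθ, mul_one]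

lemma one_sub_pf_pgf_rpow_neg {θ a b : ℝ} {f : ℝ → ℝ} (hθ : θ ≠ 0) (ha : 0 ≤ a) (hb : 0 < b)
    (hf : ∀ s ∈ Set.Ico (0:ℝ) 1, f s = 1 - (a * (1 - s) ^ (-θ) + b) ^ (-1/θ)) :
    ∀ s ∈ Set.Ico (0:ℝ) 1, 0 < 1 - f s ∧ (1 - f s) ^ (-θ) = a * (1 - s) ^ (-θ) + b := by
  intro s hs
  have hX : 0 < a * (1 - s) ^ (-θ) + b := by
    have := rpow_nonneg (sub_nonneg.2 hs.2.le) (-θ)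
    positivity
  rw [hf s hs, sub_sub_cancel, show -1 / θ = (-θ)⁻¹ by field_simp]
  exact ⟨rpow_pos_of_pos hX _, rpow_inv_rpow hX.le (neg_ne_zero.2 hθ)⟩

lemma pf_survival_scale {θ a b : ℝ} (hθ : 0 < θ) (ha : a < 1) (hb : 1 - a < b) :
    ((1 - a) / b) ^ (1 / θ) ∈ Set.Ioo (0 : ℝ) 1 ∧ b * (((1 - a) / b) ^ (1 / θ)) ^ θ = 1 - a := by
  have hb0 : 0 < b := by linarith
  have hc0 : 0 < (1 - a) / b := div_pos (by linarith) hb0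
  have hc1 : (1 - a) / b < 1 := (div_lt_one hb0).2 hb
  refine ⟨⟨rpow_pos_of_pos hc0 _, rpow_lt_one hc0.le hc1 (by positivity)⟩, ?_⟩
  rw [one_div, rpow_inv_rpow hc0.le hθ.ne', mul_div_cancel₀ _ hb0.ne']

/-- decomposition of a supercritical power-fractional Galton-Watson process.
With `f` the pgf of `PF(θ,a,b)` (`a ∈ (0,1)`, `b > 1-a`) and extinction probability
`q = 1 - ((1-a)/b)^(1/θ) ∈ (0,1)`:
(i) the Harris-Sevastyanov transform `g(s) = f(qs)/q` satisfies
`(q⁻¹ - g(s))^(-θ) = a (q⁻¹ - s)^(-θ) + b q^θ` (offspring law `PF(θ, q⁻¹, a, b q^θ)` of the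
individuals with finite line of descent, conditioned on extinction), and
(ii) `h(s) = (f(q + (1-q)s) - q)/(1-q)` satisfies
`(1 - h(s))^(-θ) = a (1-s)^(-θ) + (1-a)` (offspring law `PF₊(θ,a) = PF(θ,a,1-a)` of the
individuals with infinite line of descent, conditioned on survival). -/
theorem pf_supercritical_decomposition (θ a b : ℝ) (hθ : θ ∈ Set.Ioc (0:ℝ) 1)
    (ha : a ∈ Set.Ioo (0:ℝ) 1) (hb : 1 - a < b) (f : ℝ → ℝ)
    (hf : ∀ s ∈ Set.Ico (0:ℝ) 1, f s = 1 - (a * (1 - s) ^ (-θ) + b) ^ (-1/θ)) :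
    (1 - ((1 - a) / b) ^ (1/θ)) ∈ Set.Ioo (0:ℝ) 1 ∧
    (∀ q : ℝ, q = 1 - ((1 - a) / b) ^ (1/θ) →
      (∀ s ∈ Set.Icc (0:ℝ) 1,
        (q⁻¹ - f (q * s) / q) ^ (-θ) = a * (q⁻¹ - s) ^ (-θ) + b * q ^ θ) ∧
      (∀ s ∈ Set.Ico (0:ℝ) 1,
        (1 - (f (q + (1 - q) * s) - q) / (1 - q)) ^ (-θ)
          = a * (1 - s) ^ (-θ) + (1 - a))) := by
  obtain ⟨⟨hr0, hr1⟩, hbr⟩ := pf_survival_scale hθ.1 ha.2 hb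
  have hpf := one_sub_pf_pgf_rpow_neg hθ.1.ne' ha.1.le (by linarith [ha.2]) hf
  refine ⟨⟨by linarith, by linarith⟩, fun q hq => ⟨fun s ⟨hs0, hs1⟩ => ?_, fun s ⟨hs0, hs1⟩ => ?_⟩⟩
  · have hq0 : 0 < q := by linarith
    obtain ⟨hy, hyθ⟩ := hpf (q * s) ⟨by positivity, by nlinarith⟩
    rw [show 1 - q * s = q * (q⁻¹ - s) by field_simp] at hyθ
    rw [show q⁻¹ - f (q * s) / q = (1 - f (q * s)) / q by field_simp]
    have hu : s ≤ q⁻¹ := hs1.trans ((one_le_inv₀ hq0).2 (by linarith))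
    exact rpow_neg_div_eq_of_rpow_neg_eq hq0 (sub_nonneg.2 hu) hy.le hyθ
  · have hq1 : 1 - q = ((1 - a) / b) ^ (1 / θ) := by linarith
    obtain ⟨hy, hyθ⟩ := hpf (q + (1 - q) * s) ⟨by nlinarith, by nlinarith⟩
    rw [show 1 - (q + (1 - q) * s) = (1 - q) * (1 - s) by ring] at hyθ
    rw [show 1 - (f (q + (1 - q) * s) - q) / (1 - q) = (1 - f (q + (1 - q) * s)) / (1 - q) by
      field_simp [show 1 - q ≠ 0 by linarith]; ring]
    rw [rpow_neg_div_eq_of_rpow_neg_eq (by linarith) (by linarith) hy.le hyθ, hq1, hbr]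
end
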